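/- Let N ≥ 3, let μ be a nonzero Radon measure on ℝ^N with support contained in the open half space ℝ^N_+ and finite Newtonian potential, let 1 < k < N-1, and let p = (N-1)/(k-1). Then for every λ > 0 the problem (1.1) has no positive solution u with x' ↦ u(x',0) belonging to L^p(ℝ^{N-1}). -/

import Mathlib

open MeasureTheory ENNReal Filter

noncomputable section

/-- The point `(y', t) ∈ ℝ^N` for `y' ∈ ℝ^{N-1}`, `t ∈ ℝ`. -/
def up (N : ℕ) (y' : EuclideanSpace ℝ (Fin (N - 1))) (t : ℝ) : EuclideanSpace ℝ (Fin N) :=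
  (WithLp.equiv 2 (Fin N → ℝ)).symm fun i => if h : (i : ℕ) < N - 1 then y' ⟨i, h⟩ else t

/-- The last coordinate `x_N` of `x ∈ ℝ^N`. -/
def ht (N : ℕ) (x : EuclideanSpace ℝ (Fin N)) : ℝ :=
  if h : N - 1 < N then x ⟨N - 1, h⟩ else 0

/-- Reflection `x̄ = (x', -x_N)` of `x = (x', x_N)` in the hyperplane `x_N = 0`. -/
def reflN (N : ℕ) (x : EuclideanSpace ℝ (Fin N)) : EuclideanSpace ℝ (Fin N) :=
  (WithLp.equiv 2 (Fin N → ℝ)).symm fun i => if (i : ℕ) < N - 1 then x i else -x i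

/-- Surface area `σ_N` of the unit sphere in `ℝ^N` (equal to `N` times the unit ball volume). -/
def sphereArea (N : ℕ) : ℝ :=
  N * (volume (Metric.ball (0 : EuclideanSpace ℝ (Fin N)) 1)).toReal

/-- The open upper half space `ℝ^N_+ = ℝ^{N-1} × (0,∞)`. -/
def upperHalf (N : ℕ) : Set (EuclideanSpace ℝ (Fin N)) := {x | 0 < ht N x}

/-- `H_u(x') = ∫_{ℝ^{N-1}} u(y',0)^p |x'-y'|^{-k} dy'`. -/
def Hu (N : ℕ) (p k : ℝ) (u : EuclideanSpace ℝ (Fin N) → ℝ)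
    (x' : EuclideanSpace ℝ (Fin (N - 1))) : ℝ≥0∞ :=
  ∫⁻ y', ENNReal.ofReal (u (up N y' 0)) ^ p * ENNReal.ofReal ‖x' - y'‖ ^ (-k)

/-- The Newtonian potential `U^ν(x) = (1/((N-2)σ_N)) ∫ |x-y|^{2-N} dν(y)`. -/
def NewtPot (N : ℕ) (ν : Measure (EuclideanSpace ℝ (Fin N)))
    (x : EuclideanSpace ℝ (Fin N)) : ℝ :=
  (((N : ℝ) - 2) * sphereArea N)⁻¹ * (∫⁻ y, ENNReal.ofReal ‖x - y‖ ^ ((2:ℝ) - N) ∂ν).toReal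

/-- The Green potential `∫_{ℝ^N_+} G(x,y) dμ(y)` for the Neumann Green function
`G(x,y) = (|x-y|^{2-N} + |x̄-y|^{2-N})/((N-2)σ_N)` of the half space. -/
def GreenPot (N : ℕ) (μ : Measure (EuclideanSpace ℝ (Fin N)))
    (x : EuclideanSpace ℝ (Fin N)) : ℝ :=
  (((N : ℝ) - 2) * sphereArea N)⁻¹ *
    (∫⁻ y, (ENNReal.ofReal ‖x - y‖ ^ ((2:ℝ) - N)
          + ENNReal.ofReal ‖reflN N x - y‖ ^ ((2:ℝ) - N)) ∂μ).toReal

/-- `μ` is a nonzero Radon (locally finite Borel) measure whose support is contained in the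
open upper half space and whose Newtonian potential is finite everywhere. -/
def AdmissibleMeasure (N : ℕ) (μ : Measure (EuclideanSpace ℝ (Fin N))) : Prop :=
  μ ≠ 0 ∧ IsLocallyFiniteMeasure μ ∧
    (∃ F : Set (EuclideanSpace ℝ (Fin N)), IsClosed F ∧ F ⊆ upperHalf N ∧ μ Fᶜ = 0) ∧
    (∀ x, (∫⁻ y, ENNReal.ofReal ‖x - y‖ ^ ((2:ℝ) - N) ∂μ) < ⊤)

/-- A measurable function `u` is a positive solution of problem (1.1):
(i) `u > 0` a.e. in `ℝ^N_+`, and for a.e. `x' ∈ ℝ^{N-1}`, `u(z) → u(x',0)` as `z → (x',0)`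
with `z ∈ ℝ^N_+`;
(ii) `H_u < ∞` a.e. in `ℝ^{N-1}`, and `∫_{ℝ^{N-1}} H_u(y')|x-(y',0)|^{2-N} dy' < ∞` for
a.e. `x ∈ ℝ^N_+`;
(iii) `u(x) = ∫_{ℝ^N_+} G(x,y) dμ(y)
　　　　+ (2λ/((N-2)σ_N)) ∫∫ u(z',0)^p |x-(y',0)|^{2-N} |y'-z'|^{-k} dz' dy'`
for a.e. `x ∈ ℝ^N_+`. -/
def IsPosSolution (N : ℕ) (p lam k : ℝ) (μ : Measure (EuclideanSpace ℝ (Fin N)))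
    (u : EuclideanSpace ℝ (Fin N) → ℝ) : Prop :=
  Measurable u ∧
  (∀ᵐ x ∂(volume.restrict (upperHalf N)), 0 < u x) ∧
  (∀ᵐ x' ∂(volume : Measure (EuclideanSpace ℝ (Fin (N - 1)))),
    Tendsto u (nhdsWithin (up N x' 0) (upperHalf N)) (nhds (u (up N x' 0)))) ∧
  (∀ᵐ x' ∂(volume : Measure (EuclideanSpace ℝ (Fin (N - 1)))), Hu N p k u x' < ⊤) ∧
  (∀ᵐ x ∂(volume.restrict (upperHalf N)),
    (∫⁻ y', Hu N p k u y' * ENNReal.ofReal ‖x - up N y' 0‖ ^ ((2:ℝ) - N)) < ⊤) ∧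
  (∀ᵐ x ∂(volume.restrict (upperHalf N)),
    ENNReal.ofReal (u x) =
      ENNReal.ofReal (((N : ℝ) - 2) * sphereArea N)⁻¹ *
        (∫⁻ y, (ENNReal.ofReal ‖x - y‖ ^ ((2:ℝ) - N)
              + ENNReal.ofReal ‖reflN N x - y‖ ^ ((2:ℝ) - N)) ∂μ) +
      ENNReal.ofReal (2 * lam / (((N : ℝ) - 2) * sphereArea N)) *
        ∫⁻ y', ENNReal.ofReal ‖x - up N y' 0‖ ^ ((2:ℝ) - N) * Hu N p k u y')

/-- A measurable function `u` is a positive solution of problem (1.1) with `μ ≡ 0`: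
conditions (i), (ii) as above and
(iii) `u(x) = (2λ/((N-2)σ_N)) ∫∫ u(z',0)^p |x-(y',0)|^{2-N} |y'-z'|^{-k} dz' dy'`
for a.e. `x ∈ ℝ^N_+`. -/
def IsPosSolution0 (N : ℕ) (p lam k : ℝ) (u : EuclideanSpace ℝ (Fin N) → ℝ) : Prop :=
  Measurable u ∧
  (∀ᵐ x ∂(volume.restrict (upperHalf N)), 0 < u x) ∧
  (∀ᵐ x' ∂(volume : Measure (EuclideanSpace ℝ (Fin (N - 1)))),
    Tendsto u (nhdsWithin (up N x' 0) (upperHalf N)) (nhds (u (up N x' 0)))) ∧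
  (∀ᵐ x' ∂(volume : Measure (EuclideanSpace ℝ (Fin (N - 1)))), Hu N p k u x' < ⊤) ∧
  (∀ᵐ x ∂(volume.restrict (upperHalf N)),
    (∫⁻ y', Hu N p k u y' * ENNReal.ofReal ‖x - up N y' 0‖ ^ ((2:ℝ) - N)) < ⊤) ∧
  (∀ᵐ x ∂(volume.restrict (upperHalf N)),
    ENNReal.ofReal (u x) =
      ENNReal.ofReal (2 * lam / (((N : ℝ) - 2) * sphereArea N)) *
        ∫⁻ y', ENNReal.ofReal ‖x - up N y' 0‖ ^ ((2:ℝ) - N) * Hu N p k u y')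

/-- The boundary trace `x' ↦ u(x',0)` belongs to `L^q_loc(ℝ^{N-1})`. -/
def BdryLocLp (N : ℕ) (q : ℝ) (u : EuclideanSpace ℝ (Fin N) → ℝ) : Prop :=
  ∀ K : Set (EuclideanSpace ℝ (Fin (N - 1))), IsCompact K →
    MemLp (fun x' => u (up N x' 0)) (ENNReal.ofReal q) (volume.restrict K)


/-!
Letting interior points tend to the boundary in the integral equation (Fatou's lemma, with the
continuity of `u` up to the boundary) gives, for a.e. `x'`, both `u(x',0) ≳ U^μ(x',0) > 0` and
`u(x',0) ≳ ∫ |x'-y'|^{2-N} H_u(y') dy'`. Positivity of the trace on the unit ball yields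
`H_u(y') ≳ (1 + |y'|)^{-k}`, and integrating over the ball `B(x', |x'|/4)` alone then gives
`u(x',0) ≳ |x'|^{1-k}` for `|x'| ≥ 1`. At the critical exponent `(k - 1) p = N - 1`, so
`u(·,0)^p ≳ |x'|^{1-N}` near infinity, which is not integrable on `ℝ^{N-1}`.
-/

open Metric Set Topology Module

theorem ENNReal.rpow_le_rpow_of_nonpos {x y : ℝ≥0∞} {z : ℝ} (hz : z ≤ 0) (h : x ≤ y) :
    y ^ z ≤ x ^ z := by
  simpa only [ENNReal.rpow_neg, neg_neg, inv_inv] using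
    ENNReal.inv_le_inv.mpr (ENNReal.rpow_le_rpow h (neg_nonneg.mpr hz))

theorem ENNReal.rpow_pos_of_nonpos {x : ℝ≥0∞} {z : ℝ} (hz : z ≤ 0) (hx : x ≠ ⊤) : 0 < x ^ z := by
  rw [← neg_neg z, ENNReal.rpow_neg]
  exact ENNReal.inv_pos.mpr (ENNReal.rpow_ne_top_of_nonneg (neg_nonneg.mpr hz) hx)

theorem lintegral_pos_of_ae_pos {α : Type*} [MeasurableSpace α] {μ : Measure α} (hμ : μ ≠ 0)
    {f : α → ℝ≥0∞} (hf : AEMeasurable f μ) (hpos : ∀ᵐ a ∂μ, 0 < f a) : 0 < ∫⁻ a, f a ∂μ := by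
  refine pos_iff_ne_zero.mpr fun h0 => hμ (ae_eq_bot.mp (eventually_false_iff_eq_bot.mp ?_))
  filter_upwards [(lintegral_eq_zero_iff' hf).mp h0, hpos] with a hzero hfa
  exact hfa.ne' hzero

theorem MeasureTheory.MemLp.setLIntegral_ofReal_rpow_lt_top {α : Type*} [MeasurableSpace α]
    {μ : Measure α} {f : α → ℝ} {p : ℝ} (hp : 0 < p) (hf : MemLp f (ENNReal.ofReal p) μ)
    (s : Set α) :
    ∫⁻ a in s, ENNReal.ofReal (f a) ^ p ∂μ < ⊤ := by
  have h := lintegral_rpow_enorm_lt_top_of_eLpNorm_lt_top (by simpa using hp) ENNReal.ofReal_ne_top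
    (hf.restrict s).eLpNorm_lt_top
  rw [ENNReal.toReal_ofReal hp.le] at h
  exact (lintegral_mono fun a => ENNReal.rpow_le_rpow (Real.ofReal_le_enorm _) hp.le).trans_lt h

theorem continuous_ofReal_norm_sub_rpow_const_mul {E : Type*} [SeminormedAddCommGroup E]
    {c : ℝ≥0∞} (hc : c ≠ ⊤) (y : E) (e : ℝ) :
    Continuous fun z => c * ENNReal.ofReal ‖z - y‖ ^ e :=
  (ENNReal.continuous_const_mul hc).comp
    (ENNReal.continuous_rpow_const.comp (ENNReal.continuous_ofReal.comp (by fun_prop)))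

section Fatou

variable {X W : Type*} [MeasurableSpace W]

theorem frequently_nhdsWithin_of_ae_restrict [TopologicalSpace X] [MeasurableSpace X]
    [OpensMeasurableSpace X] (μ : Measure X) [μ.IsOpenPosMeasure] {U : Set X}
    (hU : IsOpen U) {x : X} (hx : x ∈ closure U) {P : X → Prop} (hP : ∀ᵐ z ∂μ.restrict U, P z) :
    ∃ᶠ z in 𝓝[U] x, P z := by
  intro hnot
  obtain ⟨V, hV, hVx, hVU⟩ := mem_nhdsWithin.mp hnot
  have hnull : μ.restrict U (V ∩ U) = 0 := measure_mono_null (fun z hz => hVU hz) (ae_iff.mp hP)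
  rw [Measure.restrict_apply' hU.measurableSet, inter_assoc, inter_self,
    IsOpen.measure_eq_zero_iff μ (hV.inter hU)] at hnull
  exact (mem_closure_iff.mp hx V hV hVx).ne_empty hnull

/-- Fatou's lemma along a filter on the parameter space. -/
theorem lintegral_le_of_frequently_lintegral_le {ν : Measure W} {l : Filter X}
    [l.IsCountablyGenerated] {K : X → W → ℝ≥0∞} {k : W → ℝ≥0∞} {f : X → ℝ≥0∞} {c : ℝ≥0∞}
    (hK : ∀ z, AEMeasurable (K z) ν) (hKk : ∀ᵐ w ∂ν, Tendsto (K · w) l (𝓝 (k w)))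
    (hf : Tendsto f l (𝓝 c)) (hle : ∃ᶠ z in l, ∫⁻ w, K z w ∂ν ≤ f z) :
    ∫⁻ w, k w ∂ν ≤ c := by
  obtain ⟨zs, hzs, hle⟩ := exists_seq_forall_of_frequently hle
  calc ∫⁻ w, k w ∂ν = ∫⁻ w, atTop.liminf (fun n => K (zs n) w) ∂ν :=
        lintegral_congr_ae (hKk.mono fun w hw => ((hw.comp hzs).liminf_eq).symm)
    _ ≤ atTop.liminf fun n => ∫⁻ w, K (zs n) w ∂ν := lintegral_liminf_le' fun n => hK _
    _ ≤ atTop.liminf fun n => f (zs n) := liminf_le_liminf (.of_forall hle)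
    _ = c := (hf.comp hzs).liminf_eq

theorem lintegral_le_of_ae_restrict_of_mem_closure [TopologicalSpace X]
    [FirstCountableTopology X] [MeasurableSpace X] [OpensMeasurableSpace X]
    (μ : Measure X) [μ.IsOpenPosMeasure] {U : Set X} (hU : IsOpen U) {x : X} (hx : x ∈ closure U)
    {ν : Measure W} {K : X → W → ℝ≥0∞} {f : X → ℝ≥0∞} (hK : ∀ z, AEMeasurable (K z) ν)
    (hKx : ∀ᵐ w ∂ν, ContinuousAt (K · w) x) (hf : Tendsto f (𝓝[U] x) (𝓝 (f x)))
    (hle : ∀ᵐ z ∂μ.restrict U, ∫⁻ w, K z w ∂ν ≤ f z) :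
    ∫⁻ w, K x w ∂ν ≤ f x :=
  lintegral_le_of_frequently_lintegral_le hK
    (hKx.mono fun _ hw => hw.tendsto.mono_left nhdsWithin_le_nhds) hf
    (frequently_nhdsWithin_of_ae_restrict μ hU hx hle)

end Fatou

section Kernel

theorem setLIntegral_ball_mul_le_lintegral_mul_rpow_norm_sub {E : Type*}
    [SeminormedAddCommGroup E] [MeasurableSpace E] [OpensMeasurableSpace E] (μ : Measure E)
    (g : E → ℝ≥0∞) {k : ℝ} (hk : 0 ≤ k) (y : E) :
    (∫⁻ z in ball 0 1, g z ∂μ) * ENNReal.ofReal (‖y‖ + 1) ^ (-k)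
      ≤ ∫⁻ z, g z * ENNReal.ofReal ‖y - z‖ ^ (-k) ∂μ :=
  calc (∫⁻ z in ball 0 1, g z ∂μ) * ENNReal.ofReal (‖y‖ + 1) ^ (-k)
      ≤ ∫⁻ z in ball 0 1, g z * ENNReal.ofReal (‖y‖ + 1) ^ (-k) ∂μ := lintegral_mul_const_le _ _
    _ ≤ ∫⁻ z in ball 0 1, g z * ENNReal.ofReal ‖y - z‖ ^ (-k) ∂μ := by
        refine setLIntegral_mono' measurableSet_ball fun z hz => mul_le_mul' le_rfl ?_
        refine ENNReal.rpow_le_rpow_of_nonpos (neg_nonpos.mpr hk) (ENNReal.ofReal_le_ofReal ?_)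
        linarith [norm_sub_le y z, mem_ball_zero_iff.mp hz]
    _ ≤ _ := setLIntegral_le_lintegral _ _

theorem rpow_div_four_mul_rpow_three_mul {t e k : ℝ} (ht : 0 < t) (m : ℕ) :
    (t / 4) ^ e * (3 * t) ^ (-k) * (t / 4) ^ m = 4 ^ (-(e + m)) * 3 ^ (-k) * t ^ (m + e - k) := by
  rw [Real.div_rpow ht.le (by norm_num), div_pow, Real.mul_rpow (by norm_num) ht.le,
    Real.rpow_neg (by norm_num : (0 : ℝ) ≤ 4), Real.rpow_add (by norm_num), Real.rpow_natCast,
    show m + e - k = m + e + -k by ring, Real.rpow_add ht, Real.rpow_add ht, Real.rpow_natCast]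
  field_simp

variable {E : Type*} [NormedAddCommGroup E] [NormedSpace ℝ E] [FiniteDimensional ℝ E]
  [MeasurableSpace E] [BorelSpace E] [Nontrivial E] (μ : Measure E) [μ.IsAddHaarMeasure]

/-- Integrating the kernel over the ball `B(x, ‖x‖/4)` alone gives the decay rate. -/
theorem ofReal_rpow_le_lintegral_rpow_norm_sub_mul {e k : ℝ} (he : e ≤ 0) (hk : 0 ≤ k)
    {A : ℝ≥0∞} {H : E → ℝ≥0∞} (hH : ∀ y, A * ENNReal.ofReal (‖y‖ + 1) ^ (-k) ≤ H y)
    {x : E} (hx : 1 ≤ ‖x‖) :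
    A * μ (ball 0 1) *
        ENNReal.ofReal (4 ^ (-(e + finrank ℝ E)) * 3 ^ (-k) * ‖x‖ ^ (finrank ℝ E + e - k))
      ≤ ∫⁻ y, ENNReal.ofReal ‖x - y‖ ^ e * H y ∂μ := by
  set r := ‖x‖ / 4
  have hr : 0 < r := by positivity
  have hbound : ∀ y ∈ ball x r,
      ENNReal.ofReal (r ^ e) * (A * ENNReal.ofReal ((3 * ‖x‖) ^ (-k)))
        ≤ ENNReal.ofReal ‖x - y‖ ^ e * H y := by
    intro y hy
    have hxy : ‖x - y‖ < r := by rwa [← dist_eq_norm, dist_comm]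
    rw [← ENNReal.ofReal_rpow_of_pos hr, ← ENNReal.ofReal_rpow_of_pos (by positivity)]
    refine mul_le_mul' (ENNReal.rpow_le_rpow_of_nonpos he (ENNReal.ofReal_le_ofReal hxy.le))
      ((mul_le_mul' le_rfl ?_).trans (hH y))
    refine ENNReal.rpow_le_rpow_of_nonpos (neg_nonpos.mpr hk) (ENNReal.ofReal_le_ofReal ?_)
    linarith [norm_le_norm_add_norm_sub' y x, norm_sub_rev x y, show r = ‖x‖ / 4 from rfl]
  calc A * μ (ball 0 1) *
        ENNReal.ofReal (4 ^ (-(e + finrank ℝ E)) * 3 ^ (-k) * ‖x‖ ^ (finrank ℝ E + e - k))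
      = ENNReal.ofReal (r ^ e) * (A * ENNReal.ofReal ((3 * ‖x‖) ^ (-k))) * μ (ball x r) := by
        rw [Measure.addHaar_ball μ x hr.le, ← rpow_div_four_mul_rpow_three_mul (by positivity),
          ENNReal.ofReal_mul (by positivity), ENNReal.ofReal_mul (by positivity)]
        ring
    _ = ∫⁻ y in ball x r, ENNReal.ofReal (r ^ e) * (A * ENNReal.ofReal ((3 * ‖x‖) ^ (-k))) ∂μ :=
        (setLIntegral_const _ _).symm
    _ ≤ ∫⁻ y in ball x r, ENNReal.ofReal ‖x - y‖ ^ e * H y ∂μ :=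
        setLIntegral_mono' measurableSet_ball hbound
    _ ≤ _ := setLIntegral_le_lintegral _ _

theorem not_integrableOn_norm_rpow_neg_finrank :
    ¬ IntegrableOn (fun x : E => ‖x‖ ^ (-(finrank ℝ E : ℝ))) {x | 1 ≤ ‖x‖} μ := by
  intro h
  have hm : 1 ≤ finrank ℝ E := finrank_pos
  have h1 : Integrable (fun x : E => (Ici 1).indicator (· ^ (-(finrank ℝ E : ℝ))) ‖x‖) μ :=
    (integrable_indicator_iff (measurableSet_le measurable_const measurable_norm)).2 h
  rw [integrable_fun_norm_addHaar] at h1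
  have h2 : IntegrableOn (fun y : ℝ => y ^ (-1 : ℝ)) (Ioi 1) := by
    refine (h1.mono_set (Ioi_subset_Ioi zero_le_one)).congr_fun (fun y (hy : 1 < y) => ?_)
      measurableSet_Ioi
    dsimp only
    rw [indicator_of_mem (mem_Ici.mpr hy.le), smul_eq_mul, ← Real.rpow_natCast,
      ← Real.rpow_add (by linarith), Nat.cast_sub hm]
    congr 1
    ring
  exact lt_irrefl _ ((integrableOn_Ioi_rpow_iff one_pos).mp h2)

theorem not_memLp_of_mul_rpow_norm_le {F : Type*} [NormedAddCommGroup F] {f : E → F}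
    {p c e : ℝ} (hp : 0 < p) (hc : 0 < c) (he : e * p = -finrank ℝ E)
    (hf : ∀ᵐ x ∂μ, 1 ≤ ‖x‖ → c * ‖x‖ ^ e ≤ ‖f x‖) :
    ¬ MemLp f (ENNReal.ofReal p) μ := by
  intro hLp
  have hint : Integrable (fun x => ‖f x‖ ^ p) μ := by
    simpa [ENNReal.toReal_ofReal hp.le] using
      hLp.integrable_norm_rpow (by simpa using hp) ENNReal.ofReal_ne_top
  have hS : MeasurableSet {x : E | 1 ≤ ‖x‖} := measurableSet_le measurable_const measurable_norm
  refine not_integrableOn_norm_rpow_neg_finrank μ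
    (((hint.const_mul (c ^ p)⁻¹).integrableOn).mono'
      (measurable_norm.pow_const _).aestronglyMeasurable ?_)
  filter_upwards [ae_restrict_of_ae hf, ae_restrict_mem hS] with x hfx hx
  have hpow : c ^ p * ‖x‖ ^ (-(finrank ℝ E : ℝ)) ≤ ‖f x‖ ^ p := by
    rw [← he, Real.rpow_mul (norm_nonneg x), ← Real.mul_rpow hc.le (by positivity)]
    exact Real.rpow_le_rpow (by positivity) (hfx hx) hp.le
  rw [Real.norm_of_nonneg (by positivity), le_inv_mul_iff₀ (by positivity)]
  exact hpow

end Kernel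

section HalfSpace

variable {N : ℕ}

theorem up_apply (y' : EuclideanSpace ℝ (Fin (N - 1))) (t : ℝ) (i : Fin N) :
    up N y' t i = if h : (i : ℕ) < N - 1 then y' ⟨i, h⟩ else t := rfl

theorem ht_up (hN : 1 ≤ N) (y' : EuclideanSpace ℝ (Fin (N - 1))) (t : ℝ) :
    ht N (up N y' t) = t := by
  rw [ht, dif_pos (by omega), up_apply, dif_neg (lt_irrefl _)]

@[fun_prop]
theorem continuous_up : Continuous fun q : EuclideanSpace ℝ (Fin (N - 1)) × ℝ => up N q.1 q.2 := by
  refine (PiLp.continuous_toLp 2 _).comp (continuous_pi fun i => ?_)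
  split
  · exact (PiLp.continuous_apply 2 _ _).comp continuous_fst
  · exact continuous_snd

theorem isOpen_upperHalf : IsOpen (upperHalf N) := by
  refine isOpen_lt continuous_const ?_
  unfold ht
  split
  · exact PiLp.continuous_apply 2 _ _
  · exact continuous_const

theorem up_mem_closure_upperHalf (hN : 1 ≤ N) (x' : EuclideanSpace ℝ (Fin (N - 1))) :
    up N x' 0 ∈ closure (upperHalf N) := by
  have hcont : Continuous fun t : ℝ => up N x' t :=
    continuous_up.comp (continuous_const.prodMk continuous_id)
  refine mem_closure_of_tendsto (hcont.tendsto 0 |>.mono_left nhdsWithin_le_nhds)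
    (eventually_nhdsWithin_of_forall (s := Ioi 0) fun t htpos => ?_)
  show 0 < ht N (up N x' t)
  rwa [ht_up hN]

theorem norm_up_sub_up (x' y' : EuclideanSpace ℝ (Fin (N - 1))) :
    ‖up N x' 0 - up N y' 0‖ = ‖x' - y'‖ := by
  rw [EuclideanSpace.norm_eq, EuclideanSpace.norm_eq]
  congr 1
  refine (Fintype.sum_of_injective (Fin.castLE (Nat.sub_le N 1)) (Fin.castLE_injective _) _ _
    (fun i hi => ?_) (fun j => ?_)).symm
  · have : ¬ (i : ℕ) < N - 1 := fun h => hi ⟨⟨i, h⟩, rfl⟩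
    simp [up_apply, this]
  · simp [up_apply, j.isLt]

theorem sub_two_mul_sphereArea_pos (hN : 3 ≤ N) : 0 < ((N : ℝ) - 2) * sphereArea N := by
  have hN' : (3 : ℝ) ≤ N := by exact_mod_cast hN
  have hball : 0 < (volume (ball (0 : EuclideanSpace ℝ (Fin N)) 1)).toReal :=
    ENNReal.toReal_pos (isOpen_ball.measure_pos volume (by simp)).ne' measure_ball_lt_top.ne
  exact mul_pos (by linarith) (mul_pos (by linarith) hball)

end HalfSpace

section Solution

variable {N : ℕ} {p lam k : ℝ} {μ : Measure (EuclideanSpace ℝ (Fin N))}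
  {u : EuclideanSpace ℝ (Fin N) → ℝ}

theorem measurable_Hu (hu : Measurable u) : Measurable (Hu N p k u) :=
  Measurable.lintegral_prod_right'
    (f := fun q : EuclideanSpace ℝ (Fin (N - 1)) × EuclideanSpace ℝ (Fin (N - 1)) =>
      ENNReal.ofReal (u (up N q.2 0)) ^ p * ENNReal.ofReal ‖q.1 - q.2‖ ^ (-k))
    (by fun_prop)

namespace IsPosSolution

theorem green_le (h : IsPosSolution N p lam k μ u) : ∀ᵐ z ∂volume.restrict (upperHalf N),
    ∫⁻ y, ENNReal.ofReal (((N : ℝ) - 2) * sphereArea N)⁻¹ *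
        ENNReal.ofReal ‖z - y‖ ^ ((2 : ℝ) - N) ∂μ
      ≤ ENNReal.ofReal (u z) := by
  filter_upwards [h.2.2.2.2.2] with z hz
  rw [lintegral_const_mul' _ _ ENNReal.ofReal_ne_top, hz]
  exact (mul_le_mul' le_rfl (lintegral_mono fun y => le_self_add)).trans le_self_add

theorem riesz_le (h : IsPosSolution N p lam k μ u) : ∀ᵐ z ∂volume.restrict (upperHalf N),
    ∫⁻ y', ENNReal.ofReal (2 * lam / (((N : ℝ) - 2) * sphereArea N)) *
        (ENNReal.ofReal ‖z - up N y' 0‖ ^ ((2 : ℝ) - N) * Hu N p k u y')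
      ≤ ENNReal.ofReal (u z) := by
  filter_upwards [h.2.2.2.2.2] with z hz
  rw [lintegral_const_mul' _ _ ENNReal.ofReal_ne_top, hz]
  exact le_add_self

theorem trace_green_le (h : IsPosSolution N p lam k μ u) (hN : 1 ≤ N) :
    ∀ᵐ x' : EuclideanSpace ℝ (Fin (N - 1)),
    ∫⁻ y, ENNReal.ofReal (((N : ℝ) - 2) * sphereArea N)⁻¹ *
        ENNReal.ofReal ‖up N x' 0 - y‖ ^ ((2 : ℝ) - N) ∂μ
      ≤ ENNReal.ofReal (u (up N x' 0)) := by
  filter_upwards [h.2.2.1] with x' hx'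
  exact lintegral_le_of_ae_restrict_of_mem_closure volume isOpen_upperHalf
    (up_mem_closure_upperHalf hN x') (fun z => by fun_prop)
    (ae_of_all _ fun y =>
      (continuous_ofReal_norm_sub_rpow_const_mul ENNReal.ofReal_ne_top y _).continuousAt)
    ((ENNReal.continuous_ofReal.tendsto _).comp hx') h.green_le

theorem trace_pos (h : IsPosSolution N p lam k μ u) (hN : 3 ≤ N) (hμ : μ ≠ 0) :
    ∀ᵐ x' : EuclideanSpace ℝ (Fin (N - 1)), 0 < u (up N x' 0) := by
  filter_upwards [h.trace_green_le (by omega)] with x' hx'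
  refine ENNReal.ofReal_pos.mp
    ((lintegral_pos_of_ae_pos hμ (by fun_prop) (ae_of_all _ fun y => ?_)).trans_le hx')
  have hN' : (3 : ℝ) ≤ N := by exact_mod_cast hN
  exact ENNReal.mul_pos (ENNReal.ofReal_pos.mpr (inv_pos.mpr (sub_two_mul_sphereArea_pos hN))).ne'
    (ENNReal.rpow_pos_of_nonpos (by linarith) ENNReal.ofReal_ne_top).ne'

theorem trace_riesz_le (h : IsPosSolution N p lam k μ u) (hN : 1 ≤ N) :
    ∀ᵐ x' : EuclideanSpace ℝ (Fin (N - 1)),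
    ∫⁻ y', ENNReal.ofReal (2 * lam / (((N : ℝ) - 2) * sphereArea N)) *
        (ENNReal.ofReal ‖x' - y'‖ ^ ((2 : ℝ) - N) * Hu N p k u y')
      ≤ ENNReal.ofReal (u (up N x' 0)) := by
  filter_upwards [h.2.2.1] with x' hx'
  have hcont : ∀ᵐ y' : EuclideanSpace ℝ (Fin (N - 1)), ContinuousAt (fun z =>
      ENNReal.ofReal (2 * lam / (((N : ℝ) - 2) * sphereArea N)) *
        (ENNReal.ofReal ‖z - up N y' 0‖ ^ ((2 : ℝ) - N) * Hu N p k u y')) (up N x' 0) := by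
    filter_upwards [h.2.2.2.1] with y' hy'
    simp_rw [← mul_assoc]
    exact ENNReal.Tendsto.mul_const
      ((continuous_ofReal_norm_sub_rpow_const_mul ENNReal.ofReal_ne_top _ _).tendsto _)
      (Or.inr hy'.ne)
  have hHu := measurable_Hu (p := p) (k := k) h.1
  simpa only [norm_up_sub_up, Function.comp_apply] using
    lintegral_le_of_ae_restrict_of_mem_closure volume isOpen_upperHalf
      (up_mem_closure_upperHalf hN x') (fun z => by fun_prop) hcont
      ((ENNReal.continuous_ofReal.tendsto _).comp hx') h.riesz_le

theorem exists_mul_rpow_le_Hu (h : IsPosSolution N p lam k μ u) (hN : 3 ≤ N) (hμ : μ ≠ 0)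
    (hk : 0 ≤ k) (hp : 0 < p)
    (hLp : MemLp (fun x' => u (up N x' 0)) (ENNReal.ofReal p) volume) :
    ∃ A ≠ 0, A ≠ ⊤ ∧ ∀ y' : EuclideanSpace ℝ (Fin (N - 1)),
      A * ENNReal.ofReal (‖y'‖ + 1) ^ (-k) ≤ Hu N p k u y' := by
  have hu := h.1
  refine ⟨∫⁻ z' in ball 0 1, ENNReal.ofReal (u (up N z' 0)) ^ p, ?_,
    (hLp.setLIntegral_ofReal_rpow_lt_top hp _).ne,
    setLIntegral_ball_mul_le_lintegral_mul_rpow_norm_sub volume _ hk⟩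
  refine (lintegral_pos_of_ae_pos ?_ (by fun_prop) ?_).ne'
  · exact mt Measure.restrict_eq_zero.mp (isOpen_ball.measure_pos volume (by simp)).ne'
  · filter_upwards [ae_restrict_of_ae (h.trace_pos hN hμ)] with z' hz'
    exact ENNReal.rpow_pos (ENNReal.ofReal_pos.mpr hz') ENNReal.ofReal_ne_top

theorem exists_trace_decay (h : IsPosSolution N p lam k μ u) (hN : 3 ≤ N) (hμ : μ ≠ 0)
    (hk : 0 ≤ k) (hp : 0 < p) (hlam : 0 < lam)
    (hLp : MemLp (fun x' => u (up N x' 0)) (ENNReal.ofReal p) volume) :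
    ∃ c > 0, ∀ᵐ x' : EuclideanSpace ℝ (Fin (N - 1)), 1 ≤ ‖x'‖ →
      c * ‖x'‖ ^ (1 - k) ≤ u (up N x' 0) := by
  have : Nonempty (Fin (N - 1)) := ⟨⟨0, by omega⟩⟩
  have hN' : (3 : ℝ) ≤ N := by exact_mod_cast hN
  obtain ⟨A, hA0, hAtop, hHu⟩ := h.exists_mul_rpow_le_Hu hN hμ hk hp hLp
  set C := ENNReal.ofReal (2 * lam / (((N : ℝ) - 2) * sphereArea N))
  set V := volume (ball (0 : EuclideanSpace ℝ (Fin (N - 1))) 1)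
  have hC : C ≠ 0 :=
    (ENNReal.ofReal_pos.mpr (div_pos (by linarith) (sub_two_mul_sphereArea_pos hN))).ne'
  have hCAV : (C * A * V).toReal ≠ 0 := ENNReal.toReal_ne_zero.mpr
    ⟨mul_ne_zero (mul_ne_zero hC hA0) (isOpen_ball.measure_pos volume (by simp)).ne',
      ENNReal.mul_ne_top (ENNReal.mul_ne_top ENNReal.ofReal_ne_top hAtop) measure_ball_lt_top.ne⟩
  refine ⟨(C * A * V).toReal * (4 ^ (-1 : ℝ) * 3 ^ (-k)), by positivity, ?_⟩
  filter_upwards [h.trace_riesz_le (by omega)] with x' hx' h1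
  have hK := ofReal_rpow_le_lintegral_rpow_norm_sub_mul volume (by linarith : (2 : ℝ) - N ≤ 0)
    hk hHu h1
  have hN1 : ((N - 1 : ℕ) : ℝ) = N - 1 := by rw [Nat.cast_sub (by omega), Nat.cast_one]
  rw [finrank_euclideanSpace_fin, hN1, show -((2 : ℝ) - N + (N - 1)) = -1 by ring,
    show (N : ℝ) - 1 + (2 - N) - k = 1 - k by ring] at hK
  have key : ENNReal.ofReal ((C * A * V).toReal * (4 ^ (-1 : ℝ) * 3 ^ (-k)) * ‖x'‖ ^ (1 - k))
      ≤ ENNReal.ofReal (u (up N x' 0)) :=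
    calc _ = C * (A * V * ENNReal.ofReal (4 ^ (-1 : ℝ) * 3 ^ (-k) * ‖x'‖ ^ (1 - k))) := by
          rw [mul_assoc, ENNReal.ofReal_mul ENNReal.toReal_nonneg,
            ENNReal.ofReal_toReal (ENNReal.toReal_ne_zero.mp hCAV).2]
          ring
      _ ≤ C * ∫⁻ y', ENNReal.ofReal ‖x' - y'‖ ^ ((2 : ℝ) - N) * Hu N p k u y' := by gcongr
      _ = _ := (lintegral_const_mul' _ _ ENNReal.ofReal_ne_top).symm
      _ ≤ _ := hx'
  exact (ENNReal.ofReal_le_ofReal_iff'.mp key).resolve_right (not_le.mpr (by positivity))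

end IsPosSolution

end Solution

theorem no_solution_mu_ne_zero_critical_general
    (N : ℕ) (hN : 3 ≤ N)
    (μ : Measure (EuclideanSpace ℝ (Fin N))) (hμ : AdmissibleMeasure N μ)
    (k p lam : ℝ) (hk1 : 1 < k)
    (hp : p = ((N : ℝ) - 1) / (k - 1)) (hlam : 0 < lam) :
    ¬ ∃ u : EuclideanSpace ℝ (Fin N) → ℝ, IsPosSolution N p lam k μ u ∧
      MemLp (fun x' => u (up N x' 0)) (ENNReal.ofReal p)
        (volume : Measure (EuclideanSpace ℝ (Fin (N - 1)))) := by
  rintro ⟨u, hu, hLp⟩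
  have : Nonempty (Fin (N - 1)) := ⟨⟨0, by omega⟩⟩
  have hN' : (3 : ℝ) ≤ N := by exact_mod_cast hN
  have hN1 : ((N - 1 : ℕ) : ℝ) = N - 1 := by rw [Nat.cast_sub (by omega), Nat.cast_one]
  have hp0 : 0 < p := hp ▸ div_pos (by linarith) (by linarith)
  obtain ⟨c, hc, hdecay⟩ := hu.exists_trace_decay hN hμ.1 (by linarith) hp0 hlam hLp
  refine not_memLp_of_mul_rpow_norm_le volume hp0 hc (e := 1 - k) ?_ ?_ hLp
  · rw [finrank_euclideanSpace_fin, hN1, hp]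
    field_simp [(by linarith : k - 1 ≠ 0)]
    ring
  · filter_upwards [hdecay] with x' hx' h1
    exact (hx' h1).trans (le_abs_self _)

/-- Theorem 1.1(ii): if `1 < k < N-1` and `p = (N-1)/(k-1)` then, for every `λ > 0`,
problem (1.1) with a nonzero admissible measure `μ` has no positive solution whose
boundary trace lies in `L^p(ℝ^{N-1})`. -/
theorem no_solution_mu_ne_zero_critical
    (N : ℕ) (hN : 3 ≤ N)
    (μ : Measure (EuclideanSpace ℝ (Fin N))) (hμ : AdmissibleMeasure N μ)
    (k p lam : ℝ) (hk1 : 1 < k) (hkN : k < (N : ℝ) - 1)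
    (hp : p = ((N : ℝ) - 1) / (k - 1)) (hlam : 0 < lam) :
    ¬ ∃ u : EuclideanSpace ℝ (Fin N) → ℝ, IsPosSolution N p lam k μ u ∧
      MemLp (fun x' => u (up N x' 0)) (ENNReal.ofReal p)
        (volume : Measure (EuclideanSpace ℝ (Fin (N - 1)))) :=
  no_solution_mu_ne_zero_critical_general N hN μ hμ k p lam hk1 hp hlam

end
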